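/- With the setup of ≤_O: a coset representative w ∈ W(I,J,K) has a unique minimal-length element in its coset w W_K W_{I,J} (i.e. |Min(w)| = 1) if and only if w ∈ W^{I∪J∪K}. -/

import Mathlib

/-!
If `w` has a right descent `sᵢ` with `i ∈ I`, then `w sᵢ sᵢ*` lies in the coset `[w]`, has the
length of `w` because `w` has no right descent in `J`, and differs from `w` because
`W_I ∩ W_J = 1`. Conversely, if `w ∈ W^{I∪J∪K}` then lengths add along `w W_{I∪J∪K}`, so an
element `w a x x*` of `[w]` of length `ℓ(w)` forces `a x x* = 1`, hence `a = x = 1` by the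
direct product decomposition of `W_{I∪J∪K}`.

Additivity of length on parabolic cosets rests on the exchange condition, obtained from Tits'
action of `W` on `W × ZMod 2`: its cocycle `η(w, sᵢ)` is `1` exactly when `sᵢ` is a right
descent of `w`, and vanishes unless `sᵢ` occurs in the right inversion sequence of a word for `w`.
-/

section BruhatSetup

variable {B : Type*} {W : Type*} [Group W] {M : CoxeterMatrix B}

/-- Strong Bruhat order: `u ≤ v` iff every reduced word for `v` has a sublist
that is a reduced word for `u`. -/
def BruhatLE (cs : CoxeterSystem M W) (u v : W) : Prop :=
  ∀ ω : List B, cs.IsReduced ω → cs.wordProd ω = v →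
    ∃ ω' : List B, List.Sublist ω' ω ∧ cs.IsReduced ω' ∧ cs.wordProd ω' = u

/-- Strict strong Bruhat order. -/
def BruhatLT (cs : CoxeterSystem M W) (u v : W) : Prop :=
  BruhatLE cs u v ∧ u ≠ v

/-- The standard parabolic subgroup `W_L` generated by the simple reflections in `L`. -/
def parab (cs : CoxeterSystem M W) (L : Set B) : Subgroup W :=
  Subgroup.closure (cs.simple '' L)

/-- The set `W^L` of minimal length coset representatives for `W / W_L`. -/
def minReps (cs : CoxeterSystem M W) (L : Set B) : Set W :=
  {w : W | ∀ i ∈ L, cs.length w < cs.length (w * cs.simple i)}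

/-- Right weak order: `v ≤_R w` iff `ℓ(w) = ℓ(w v⁻¹) + ℓ(v)`. -/
def leR (cs : CoxeterSystem M W) (v w : W) : Prop :=
  cs.length w = cs.length (w * v⁻¹) + cs.length v

/-- The setup of the order `≤_O`: `I`, `J`, `K` are pairwise disjoint and pairwise
disconnected subsets of the simple system (so that `W_{I∪J∪K} = W_I × W_J × W_K`),
and `σ : x ↦ x*` restricts to an isomorphism of Coxeter groups `W_I → W_J`
(a bijective group homomorphism sending simple reflections to simple reflections). -/
structure GoodSetup (cs : CoxeterSystem M W) (I J K : Set B) (σ : W → W) : Prop where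
  disjIJ : Disjoint I J
  disjIK : Disjoint I K
  disjJK : Disjoint J K
  commIJ : ∀ i ∈ I, ∀ j ∈ J, Commute (cs.simple i) (cs.simple j)
  commIK : ∀ i ∈ I, ∀ k ∈ K, Commute (cs.simple i) (cs.simple k)
  commJK : ∀ j ∈ J, ∀ k ∈ K, Commute (cs.simple j) (cs.simple k)
  directProd : ∀ x ∈ parab cs I, ∀ y ∈ parab cs J, ∀ z ∈ parab cs K,
    x * y * z = 1 → x = 1 ∧ y = 1 ∧ z = 1
  mulSigma : ∀ x ∈ parab cs I, ∀ y ∈ parab cs I, σ (x * y) = σ x * σ y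
  bijSigma : Set.BijOn σ (parab cs I : Set W) (parab cs J : Set W)
  simpleSigma : ∀ i ∈ I, ∃ j ∈ J, σ (cs.simple i) = cs.simple j

/-- Membership in the coset `[w] = w · W_K · W_{I,J}` where `W_{I,J} = {x x* : x ∈ W_I}`. -/
def inCoset (cs : CoxeterSystem M W) (I K : Set B) (σ : W → W) (w u : W) : Prop :=
  ∃ a ∈ parab cs K, ∃ x ∈ parab cs I, u = w * a * (x * σ x)

/-- The relation `≤_O`: `w' ≤_O w` iff some `u ∈ [w']` satisfies `u ≤ w` in Bruhat order. -/
def leO (cs : CoxeterSystem M W) (I K : Set B) (σ : W → W) (w' w : W) : Prop :=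
  ∃ u, inCoset cs I K σ w' u ∧ BruhatLE cs u w

/-- The strict relation associated to `≤_O`. -/
def ltO (cs : CoxeterSystem M W) (I K : Set B) (σ : W → W) (w' w : W) : Prop :=
  leO cs I K σ w' w ∧ w' ≠ w

/-- `Min(w)`: the elements of the coset `[w]` of length `ℓ(w)`. -/
def MinC (cs : CoxeterSystem M W) (I K : Set B) (σ : W → W) (w : W) : Set W :=
  {u : W | inCoset cs I K σ w u ∧ cs.length u = cs.length w}

/-- The set `M` of all elements having minimal length in their coset mod `W_K W_{I,J}`. -/
def Mset (cs : CoxeterSystem M W) (I J K : Set B) (σ : W → W) : Set W :=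
  {u : W | ∃ w ∈ minReps cs (J ∪ K), u ∈ MinC cs I K σ w}

theorem simple_mem_parab (cs : CoxeterSystem M W) {L : Set B} {i : B} (hi : i ∈ L) :
    cs.simple i ∈ parab cs L :=
  Subgroup.subset_closure ⟨i, hi, rfl⟩

theorem parab_mono (cs : CoxeterSystem M W) {L L' : Set B} (h : L ⊆ L') :
    parab cs L ≤ parab cs L' :=
  Subgroup.closure_mono (Set.image_mono h)

theorem commute_of_mem_parab (cs : CoxeterSystem M W) {S T : Set B}
    (hST : ∀ a ∈ S, ∀ b ∈ T, Commute (cs.simple a) (cs.simple b)) {x y : W}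
    (hx : x ∈ parab cs S) (hy : y ∈ parab cs T) : Commute x y := by
  have hle : parab cs T ≤ Subgroup.centralizer (parab cs S) := by
    rw [parab, parab, Subgroup.centralizer_closure, Subgroup.closure_le]
    rintro _ ⟨b, hb, rfl⟩
    rw [SetLike.mem_coe, Subgroup.mem_centralizer_iff]
    rintro _ ⟨a, ha, rfl⟩
    exact hST a ha b hb
  exact Subgroup.mem_centralizer_iff.mp (hle hy) x hx

theorem mul_mul_inv_eq_iff (a t r : W) : a * t * a⁻¹ = r ↔ t = a⁻¹ * r * a := by
  constructor <;> rintro rfl <;> group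

namespace CoxeterSystem

variable (cs : CoxeterSystem M W)

local prefix:100 "s" => cs.simple
local prefix:100 "π" => cs.wordProd
local prefix:100 "ℓ" => cs.length
local prefix:100 "ris" => cs.rightInvSeq

section ReflectionCocycle

open Classical

noncomputable def reflPerm (i : B) : Equiv.Perm (W × ZMod 2) :=
  Function.Involutive.toPerm (fun p => (s i * p.1 * s i, p.2 + if p.1 = s i then 1 else 0))
    (by
      rintro ⟨t, c⟩
      have hconj : s i * (s i * t * s i) * s i = t := by
        simp only [← mul_assoc, simple_mul_simple_self, one_mul, simple_mul_simple_cancel_right]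
      have hflag : (s i * t * s i = s i) ↔ t = s i := by
        simpa [cs.inv_simple, ← mul_assoc] using mul_mul_inv_eq_iff (s i) t (s i)
      ext
      · exact hconj
      · simp only [hflag, add_assoc, ← two_mul, CharTwo.two_eq_zero, zero_mul, add_zero])

theorem reflPerm_apply (i : B) (t : W) (c : ZMod 2) :
    cs.reflPerm i (t, c) = (s i * t * s i, c + if t = s i then 1 else 0) := rfl

theorem inv_pow_mul_simple (i i' : B) (k : ℕ) :
    ((s i * s i') ^ k)⁻¹ * s i' = s i' * (s i * s i') ^ k := by
  have hinv : (s i * s i')⁻¹ = s i' * (s i * s i') * (s i')⁻¹ := by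
    simp only [mul_inv_rev, inv_simple, mul_assoc, simple_mul_simple_self, mul_one]
  rw [← inv_pow, hinv, conj_pow]
  group

theorem reflPerm_mul_pow_apply (i i' : B) (k : ℕ) (t : W) (c : ZMod 2) :
    ((cs.reflPerm i * cs.reflPerm i') ^ k) (t, c) =
      ((s i * s i') ^ k * t * ((s i * s i') ^ k)⁻¹,
        c + ∑ n ∈ Finset.range (2 * k), if t = s i' * (s i * s i') ^ n then 1 else 0) := by
  set g := s i * s i'
  induction k generalizing t c with
  | zero => simp
  | succ k ih =>
    have first : (g ^ k * t * (g ^ k)⁻¹ = s i') ↔ t = s i' * g ^ (2 * k) := by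
      rw [mul_mul_inv_eq_iff, inv_pow_mul_simple, mul_assoc, ← pow_add, two_mul]
    have second : (s i' * (g ^ k * t * (g ^ k)⁻¹) * s i' = s i) ↔
        t = s i' * g ^ (2 * k + 1) := by
      have hconj : s i' * (g ^ k * t * (g ^ k)⁻¹) * s i' =
          (s i' * g ^ k) * t * (s i' * g ^ k)⁻¹ := by
        simp only [mul_inv_rev, inv_simple, mul_assoc]
      have hpow : s i' * g ^ k * s i * (s i' * g ^ k) = s i' * g ^ (2 * k + 1) := by
        rw [show 2 * k + 1 = k + 1 + k by ring, pow_add, pow_succ]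
        simp only [g, mul_assoc]
      rw [hconj, mul_mul_inv_eq_iff, mul_inv_rev, inv_simple, inv_pow_mul_simple, hpow]
    rw [pow_succ', Equiv.Perm.mul_apply, ih, Equiv.Perm.mul_apply, reflPerm_apply,
      reflPerm_apply, first, second, mul_add_one, Finset.sum_range_succ, Finset.sum_range_succ]
    ext
    · simp only [g, pow_succ', mul_inv_rev, inv_simple, mul_assoc]
    · simp only [add_assoc]

theorem isLiftable_reflPerm : M.IsLiftable cs.reflPerm := by
  intro i i'
  refine Equiv.ext fun ⟨t, c⟩ => ?_
  have hperiodic : ∀ n, s i' * (s i * s i') ^ (M i i' + n) = s i' * (s i * s i') ^ n := by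
    intro n
    rw [pow_add, simple_mul_simple_pow, one_mul]
  rw [reflPerm_mul_pow_apply, two_mul, Finset.sum_range_add]
  simp only [hperiodic, CharTwo.add_self_eq_zero, add_zero, simple_mul_simple_pow, one_mul,
    inv_one, mul_one, Equiv.Perm.one_apply]

noncomputable def reflRep : W →* Equiv.Perm (W × ZMod 2) :=
  cs.lift ⟨cs.reflPerm, cs.isLiftable_reflPerm⟩

theorem reflRep_simple (i : B) : cs.reflRep (s i) = cs.reflPerm i :=
  cs.lift_apply_simple cs.isLiftable_reflPerm i

/-- The parity of the number of occurrences of `t` in the right inversion sequence of any word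
for `w`. -/
noncomputable def reflCocycle (w t : W) : ZMod 2 := (cs.reflRep w (t, 0)).2

theorem reflRep_apply (w t : W) (c : ZMod 2) :
    cs.reflRep w (t, c) = (w * t * w⁻¹, c + cs.reflCocycle w t) := by
  induction w using cs.simple_induction_left generalizing t c with
  | one => simp [reflCocycle]
  | mul_simple_left w i ih =>
    have hcocycle : cs.reflCocycle (s i * w) t =
        cs.reflCocycle w t + if w * t * w⁻¹ = s i then 1 else 0 := by
      rw [reflCocycle, map_mul, Equiv.Perm.mul_apply, ih, reflRep_simple, reflPerm_apply, zero_add]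
    rw [map_mul, Equiv.Perm.mul_apply, ih, reflRep_simple, reflPerm_apply, hcocycle]
    ext
    · simp only [mul_inv_rev, inv_simple, mul_assoc]
    · ring

theorem reflCocycle_mul (x y t : W) :
    cs.reflCocycle (x * y) t = cs.reflCocycle y t + cs.reflCocycle x (y * t * y⁻¹) := by
  rw [reflCocycle, map_mul, Equiv.Perm.mul_apply, reflRep_apply, reflRep_apply, zero_add]

theorem reflCocycle_simple (i : B) (t : W) :
    cs.reflCocycle (s i) t = if t = s i then 1 else 0 := by
  rw [reflCocycle, reflRep_simple, reflPerm_apply, zero_add]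

theorem reflCocycle_wordProd_eq_zero {ω : List B} {t : W} (ht : t ∉ ris ω) :
    cs.reflCocycle (π ω) t = 0 := by
  induction ω with
  | nil => simp [reflCocycle]
  | cons i ω ih =>
    have hris : ris (i :: ω) = (π ω)⁻¹ * s i * π ω :: ris ω := rfl
    rw [hris, List.mem_cons, not_or] at ht
    rw [wordProd_cons, reflCocycle_mul, ih ht.2, reflCocycle_simple, mul_mul_inv_eq_iff,
      if_neg ht.1, add_zero]

theorem mem_rightInvSeq_of_reflCocycle_eq_one {ω : List B} {t : W}
    (h : cs.reflCocycle (π ω) t = 1) : t ∈ ris ω := by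
  by_contra ht
  rw [cs.reflCocycle_wordProd_eq_zero ht] at h
  exact zero_ne_one h

end ReflectionCocycle

theorem length_mul_simple_lt_of_reflCocycle_eq_one {w : W} {i : B}
    (h : cs.reflCocycle w (s i) = 1) : ℓ (w * s i) < ℓ w := by
  obtain ⟨ω, hred, rfl⟩ := cs.exists_isReduced w
  exact (cs.isRightInversion_of_mem_rightInvSeq hred
    (cs.mem_rightInvSeq_of_reflCocycle_eq_one h)).2

theorem reflCocycle_eq_one_of_length_mul_simple_lt {w : W} {i : B}
    (h : ℓ (w * s i) < ℓ w) : cs.reflCocycle w (s i) = 1 := by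
  by_contra hne
  have hzero : cs.reflCocycle w (s i) = 0 :=
    (by decide : ∀ a : ZMod 2, a ≠ 1 → a = 0) _ hne
  have hflip : cs.reflCocycle (w * s i) (s i) = 1 := by
    rw [reflCocycle_mul, reflCocycle_simple, if_pos rfl, inv_simple, simple_mul_simple_cancel_right,
      hzero, add_zero]
  have := cs.length_mul_simple_lt_of_reflCocycle_eq_one hflip
  rw [simple_mul_simple_cancel_right] at this
  omega

theorem exists_eraseIdx_wordProd_eq_mul_simple {ω : List B} {i : B}
    (h : ℓ (π ω * s i) < ℓ (π ω)) : ∃ j < ω.length, π (ω.eraseIdx j) = π ω * s i := by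
  have hmem := cs.mem_rightInvSeq_of_reflCocycle_eq_one
    (cs.reflCocycle_eq_one_of_length_mul_simple_lt h)
  obtain ⟨j, hj, hget⟩ := List.getElem_of_mem hmem
  refine ⟨j, by simpa using hj, ?_⟩
  rw [← wordProd_mul_getD_rightInvSeq, List.getD_eq_getElem _ _ hj, hget]

theorem exists_isReduced_sublist_mul_simple {ω : List B} (hω : cs.IsReduced ω) (i : B) :
    ∃ ω', cs.IsReduced ω' ∧ ω'.Sublist (ω ++ [i]) ∧ π ω' = π ω * s i := by
  rcases cs.length_mul_simple (π ω) i with hup | hdown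
  · refine ⟨ω ++ [i], ?_, List.Sublist.refl _, by rw [wordProd_append, wordProd_singleton]⟩
    rw [IsReduced, wordProd_append, wordProd_singleton, hup, hω.eq, List.length_append,
      List.length_singleton]
  · obtain ⟨j, hj, hexch⟩ :=
      cs.exists_eraseIdx_wordProd_eq_mul_simple (ω := ω) (i := i) (by omega)
    refine ⟨ω.eraseIdx j, ?_, (List.eraseIdx_sublist ω j).trans (List.sublist_append_left ω [i]),
      hexch⟩
    have := List.length_eraseIdx_add_one hj
    rw [IsReduced, hexch]
    rw [hω.eq] at hdown
    omega

theorem exists_isReduced_of_mem_parab {L : Set B} {v : W} (hv : v ∈ parab cs L) :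
    ∃ ω, cs.IsReduced ω ∧ (∀ b ∈ ω, b ∈ L) ∧ π ω = v := by
  have step : ∀ x : W, ∀ i ∈ L, (∃ ω, cs.IsReduced ω ∧ (∀ b ∈ ω, b ∈ L) ∧ π ω = x) →
      ∃ ω, cs.IsReduced ω ∧ (∀ b ∈ ω, b ∈ L) ∧ π ω = x * s i := by
    rintro _ i hi ⟨ω, hred, hL, rfl⟩
    obtain ⟨ω', hred', hsub, hprod⟩ := cs.exists_isReduced_sublist_mul_simple hred i
    refine ⟨ω', hred', fun b hb => ?_, hprod⟩
    rcases List.mem_append.mp (hsub.subset hb) with hb | hb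
    · exact hL b hb
    · rwa [List.mem_singleton.mp hb]
  induction hv using Subgroup.closure_induction_right with
  | one => exact ⟨[], by simp [IsReduced], by simp, wordProd_nil cs⟩
  | mul_right x _ _ hy ih =>
    obtain ⟨i, hi, rfl⟩ := hy
    exact step x i hi ih
  | mul_inv_cancel x _ _ hy ih =>
    obtain ⟨i, hi, rfl⟩ := hy
    rw [inv_simple]
    exact step x i hi ih

theorem exists_rightDescent_of_mem_parab {L : Set B} {v : W} (hv : v ∈ parab cs L)
    (hv1 : v ≠ 1) : ∃ i ∈ L, ℓ (v * s i) < ℓ v := by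
  obtain ⟨ω, hred, hL, rfl⟩ := cs.exists_isReduced_of_mem_parab hv
  obtain rfl | ⟨ω', i, rfl⟩ := List.eq_nil_or_concat' ω
  · exact absurd cs.wordProd_nil hv1
  · refine ⟨i, hL i (by simp), ?_⟩
    rw [hred.eq, wordProd_append, wordProd_singleton, simple_mul_simple_cancel_right]
    exact (cs.length_wordProd_le ω').trans_lt (by simp)

theorem wordProd_mem_parab {L : Set B} {ω : List B} (hL : ∀ b ∈ ω, b ∈ L) :
    π ω ∈ parab cs L :=
  (parab cs L).list_prod_mem (by simpa using fun b hb => simple_mem_parab cs (hL b hb))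

theorem length_mul_wordProd_mul_simple {L : Set B} {u : W}
    (hu : ∀ z ∈ parab cs L, ℓ u ≤ ℓ (u * z)) {ω : List B} (hL : ∀ b ∈ ω, b ∈ L)
    (hadd : ℓ (u * π ω) = ℓ u + ω.length) {i : B} (hi : i ∈ L)
    (hred : cs.IsReduced (ω ++ [i])) :
    ℓ (u * π ω * s i) = ℓ (u * π ω) + 1 := by
  refine (cs.length_mul_simple (u * π ω) i).resolve_right fun hdown => ?_
  obtain ⟨ρ, hρ, rfl⟩ := cs.exists_isReduced u
  obtain ⟨j, hj, hexch⟩ := cs.exists_eraseIdx_wordProd_eq_mul_simple (ω := ρ ++ ω) (i := i)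
    (by rw [wordProd_append]; omega)
  rw [wordProd_append] at hexch
  rcases lt_or_ge j ρ.length with hjρ | hjρ
  · -- the deleted letter lies in `ρ`: then `u` is not minimal in `u W_L`
    rw [List.eraseIdx_append_of_lt_length hjρ, wordProd_append] at hexch
    have hz : π ρ * (π ω * s i * (π ω)⁻¹) = π (ρ.eraseIdx j) := by
      rw [← mul_assoc, ← mul_assoc, ← hexch]
      group
    have hmin := hu _ (mul_mem (mul_mem (cs.wordProd_mem_parab hL) (simple_mem_parab cs hi))
      (inv_mem (cs.wordProd_mem_parab hL)))
    rw [hz, hρ.eq] at hmin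
    have := cs.length_wordProd_le (ρ.eraseIdx j)
    have := List.length_eraseIdx_add_one hjρ
    omega
  · -- the deleted letter lies in `ω`: then `ω ++ [i]` is not reduced
    rw [List.eraseIdx_append_of_length_le hjρ, wordProd_append, mul_assoc] at hexch
    have hlen := hred.eq
    rw [wordProd_append, wordProd_singleton, ← mul_left_cancel hexch, List.length_append,
      List.length_singleton] at hlen
    have := cs.length_wordProd_le (ω.eraseIdx (j - ρ.length))
    have := List.length_eraseIdx_le ω (j - ρ.length)
    omega

theorem length_mul_of_forall_le_length_mul {L : Set B} {u v : W}
    (hu : ∀ z ∈ parab cs L, ℓ u ≤ ℓ (u * z)) (hv : v ∈ parab cs L) :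
    ℓ (u * v) = ℓ u + ℓ v := by
  obtain ⟨ω, hred, hL, rfl⟩ := cs.exists_isReduced_of_mem_parab hv
  clear hv
  rw [hred.eq]
  induction ω using List.reverseRecOn with
  | nil => simp
  | append_singleton ω i ih =>
    have hL' : ∀ b ∈ ω, b ∈ L := fun b hb => hL b (List.mem_append_left _ hb)
    have hredω : cs.IsReduced ω := by simpa using hred.take ω.length
    rw [wordProd_append, wordProd_singleton, ← mul_assoc,
      cs.length_mul_wordProd_mul_simple hu hL' (ih hredω hL') (hL i (by simp)) hred,
      ih hredω hL', List.length_append, List.length_singleton, add_assoc]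

theorem le_length_mul_of_mem_minReps {L : Set B} {w : W} (hw : w ∈ minReps cs L) {z : W}
    (hz : z ∈ parab cs L) : ℓ w ≤ ℓ (w * z) := by
  obtain ⟨z₀, hz₀, hmin⟩ := (measure fun z => ℓ (w * z)).wf.has_min (parab cs L : Set W)
    ⟨1, one_mem _⟩
  have hu : ∀ z ∈ parab cs L, ℓ (w * z₀) ≤ ℓ (w * z₀ * z) := fun z hz => by
    rw [mul_assoc]
    exact not_lt.mp (hmin (z₀ * z) (mul_mem hz₀ hz))
  -- `w = (w z₀) z₀⁻¹`, and a right descent of `z₀⁻¹` in `L` would be one of `w`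
  obtain rfl : z₀ = 1 := by
    by_contra hne
    obtain ⟨i, hi, hdesc⟩ :=
      cs.exists_rightDescent_of_mem_parab (inv_mem hz₀) (inv_ne_one.mpr hne)
    have hws := cs.length_mul_of_forall_le_length_mul hu
      (mul_mem (inv_mem hz₀) (simple_mem_parab cs hi))
    have hw' := cs.length_mul_of_forall_le_length_mul hu (inv_mem hz₀)
    simp only [mul_inv_cancel_right, ← mul_assoc] at hws hw'
    have := hw i hi
    omega
  simpa using hu z hz

theorem length_mul_of_mem_minReps {L : Set B} {w v : W} (hw : w ∈ minReps cs L)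
    (hv : v ∈ parab cs L) : ℓ (w * v) = ℓ w + ℓ v :=
  cs.length_mul_of_forall_le_length_mul (fun _ => cs.le_length_mul_of_mem_minReps hw) hv

theorem length_mul_simple_mul_simple {w : W} {i j : B} (hij : Commute (s i) (s j))
    (hi : ℓ (w * s i) < ℓ w) (hj : ℓ w < ℓ (w * s j)) : ℓ (w * s i * s j) = ℓ w := by
  have hswap : w * s i * s j * s i = w * s j := by
    rw [mul_assoc _ (s j), ← hij.eq, ← mul_assoc, simple_mul_simple_cancel_right]
  have := cs.length_mul_le (w * s i * s j) (s i)
  rw [hswap, length_simple] at this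
  rcases cs.length_mul_simple w i with _ | _ <;>
    rcases cs.length_mul_simple (w * s i) j with _ | _ <;> omega

end CoxeterSystem

namespace GoodSetup

variable {cs : CoxeterSystem M W} {I J K : Set B} {σ : W → W}

theorem sigma_one (h : GoodSetup cs I J K σ) : σ 1 = 1 := by
  have := h.mulSigma 1 (one_mem _) 1 (one_mem _)
  rwa [mul_one, left_eq_mul] at this

theorem self_mem_MinC (h : GoodSetup cs I J K σ) (w : W) : w ∈ MinC cs I K σ w :=
  ⟨⟨1, one_mem _, 1, one_mem _, by rw [h.sigma_one]; simp⟩, rfl⟩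

theorem eq_of_mem_MinC (h : GoodSetup cs I J K σ) {w u : W} (hw : w ∈ minReps cs (I ∪ J ∪ K))
    (hu : u ∈ MinC cs I K σ w) : u = w := by
  obtain ⟨⟨a, ha, x, hx, rfl⟩, hlen⟩ := hu
  have hσx : σ x ∈ parab cs J := h.bijSigma.mapsTo hx
  have hmem : a * (x * σ x) ∈ parab cs (I ∪ J ∪ K) :=
    mul_mem (parab_mono cs Set.subset_union_right ha)
      (mul_mem (parab_mono cs (Set.subset_union_left.trans Set.subset_union_left) hx)
        (parab_mono cs (Set.subset_union_right.trans Set.subset_union_left) hσx))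
  have hadd := cs.length_mul_of_mem_minReps hw hmem
  rw [← mul_assoc, hlen, left_eq_add, cs.length_eq_zero_iff] at hadd
  have hcomm : Commute a (x * σ x) :=
    (commute_of_mem_parab cs (fun k hk i hi => (h.commIK i hi k hk).symm) ha hx).mul_right
      (commute_of_mem_parab cs (fun k hk j hj => (h.commJK j hj k hk).symm) ha hσx)
  obtain ⟨rfl, hσ1, rfl⟩ := h.directProd x hx (σ x) hσx a ha (hcomm.eq ▸ hadd)
  simp [hσ1]

theorem exists_ne_mem_MinC (h : GoodSetup cs I J K σ) {w : W} (hw : w ∈ minReps cs (J ∪ K))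
    (hw' : w ∉ minReps cs (I ∪ J ∪ K)) : ∃ u ∈ MinC cs I K σ w, u ≠ w := by
  obtain ⟨i, hi, hdesc⟩ : ∃ i ∈ I, cs.length (w * cs.simple i) < cs.length w := by
    simp only [minReps, Set.mem_ofPred_eq, not_forall, not_lt] at hw'
    obtain ⟨i, hi, hle⟩ := hw'
    have hlt := lt_of_le_of_ne hle (cs.length_mul_simple_ne w i)
    rcases hi with (hI | hJ) | hK
    · exact ⟨i, hI, hlt⟩
    · exact absurd (hw i (Or.inl hJ)) hlt.not_gt
    · exact absurd (hw i (Or.inr hK)) hlt.not_gt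
  obtain ⟨j, hj, hσi⟩ := h.simpleSigma i hi
  refine ⟨w * cs.simple i * cs.simple j, ⟨⟨1, one_mem _, cs.simple i, simple_mem_parab cs hi,
    by rw [hσi, mul_one, mul_assoc]⟩, cs.length_mul_simple_mul_simple (h.commIJ i hi j hj) hdesc
    (hw j (Or.inl hj))⟩, fun heq => ?_⟩
  rw [mul_assoc, mul_eq_left] at heq
  have := (h.directProd _ (simple_mem_parab cs hi) _ (simple_mem_parab cs hj) 1 (one_mem _)
    (by rw [heq, mul_one])).1
  simpa [this] using cs.length_simple i

end GoodSetup

theorem statement_7 (cs : CoxeterSystem M W) (I J K : Set B) (σ : W → W)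
    (h : GoodSetup cs I J K σ) (w : W) (hw : w ∈ minReps cs (J ∪ K)) :
    (∃! u, u ∈ MinC cs I K σ w) ↔ w ∈ minReps cs (I ∪ J ∪ K) := by
  refine ⟨fun ⟨u, _, huniq⟩ => ?_,
    fun hw' => ⟨w, h.self_mem_MinC w, fun u hu => h.eq_of_mem_MinC hw' hu⟩⟩
  by_contra hw'
  obtain ⟨v, hv, hne⟩ := h.exists_ne_mem_MinC hw hw'
  exact hne ((huniq v hv).trans (huniq w (h.self_mem_MinC w)).symm)

end BruhatSetup
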